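/- Let d, m, n be positive integers with d > 2m. Let G be a balanced bipartite graph on 2n vertices with e(G) ≤ dn + m and minimum degree δ(G) ≥ d, and let E be a balanced bipartite graph on the same vertex parts, edge-disjoint from G, which is (1, d/2)-dense. Then there exist a subgraph H ⊆ G and a matching M ⊆ E with at most m edges such that H ∪ M is d-regular. -/

import Mathlib

/-- Degree of a vertex `x` of the first part in a bipartite graph given as a set of pairs. -/
def bdegX {n : ℕ} (G : Finset (Fin n × Fin n)) (x : Fin n) : ℕ :=
  (G.filter (fun e => e.1 = x)).card

/-- Degree of a vertex `y` of the second part in a bipartite graph given as a set of pairs. -/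
def bdegY {n : ℕ} (G : Finset (Fin n × Fin n)) (y : Fin n) : ℕ :=
  (G.filter (fun e => e.2 = y)).card

/-- A set of pairs is a matching if distinct edges share no endpoint. -/
def IsBipMatching {n : ℕ} (M : Finset (Fin n × Fin n)) : Prop :=
  ∀ e ∈ M, ∀ f ∈ M, e ≠ f → e.1 ≠ f.1 ∧ e.2 ≠ f.2

/-- A bipartite graph `E` is `(e, m)`-dense if for every `λ ≥ 1` and all sets `A`, `B` of the
two parts with `|A| = |B| = λm` there are at least `λ²e` edges of `E` between `A` and `B`. -/
def BipDense {n : ℕ} (E : Finset (Fin n × Fin n)) (e m : ℝ) : Prop :=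
  ∀ lam : ℝ, 1 ≤ lam → ∀ A B : Finset (Fin n),
    (A.card : ℝ) = lam * m → (B.card : ℝ) = lam * m →
    lam ^ 2 * e ≤ ((E.filter (fun p => p.1 ∈ A ∧ p.2 ∈ B)).card : ℝ)

/-!
Start from `H = G`, `M = ∅` and keep every degree of `H ∪ M` at least `d`. While
`|H| + |M| > dn` there are vertices `x ∈ X`, `y ∈ Y` of degree `> d`. Since `M` is a matching,
each of them has at least `d - |M| - 1 ≥ d - m ≥ d / 2` neighbours in `H` that are not covered
by `M` (for `x`, also distinct from `y`), so `(1, d/2)`-density of `E` yields an edge `x'y'` of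
`E` with `x'y ∈ H` and `xy' ∈ H`. Moving `xy'`, `x'y` out of `H` and `x'y'` into `M` lowers
`|H| + |M|` by one, lowers only the degrees of `x` and `y`, and keeps `M` a matching. Since
`|G| ≤ dn + m`, after at most `m` such switches `H ∪ M` has `dn` edges and minimum degree `d`,
so it is `d`-regular.
-/

open Finset

section Degrees

variable {n d : ℕ} {H M : Finset (Fin n × Fin n)} {e : Fin n × Fin n}

def nbrX (H : Finset (Fin n × Fin n)) (x : Fin n) : Finset (Fin n) :=
  univ.filter fun y => (x, y) ∈ H

def nbrY (H : Finset (Fin n × Fin n)) (y : Fin n) : Finset (Fin n) :=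
  univ.filter fun x => (x, y) ∈ H

@[simp] lemma mem_nbrX {x y : Fin n} : y ∈ nbrX H x ↔ (x, y) ∈ H := by
  simp [nbrX]

@[simp] lemma mem_nbrY {x y : Fin n} : x ∈ nbrY H y ↔ (x, y) ∈ H := by
  simp [nbrY]

lemma card_nbrX (H : Finset (Fin n × Fin n)) (x : Fin n) : (nbrX H x).card = bdegX H x :=
  card_nbij' (fun y => (x, y)) Prod.snd (fun y hy => by simpa [bdegX] using hy)
    (fun _ h => by obtain ⟨hab, rfl⟩ := mem_filter.1 h; simpa using hab) (fun _ _ => rfl)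
    (fun _ h => by obtain ⟨-, rfl⟩ := mem_filter.1 h; rfl)

lemma card_nbrY (H : Finset (Fin n × Fin n)) (y : Fin n) : (nbrY H y).card = bdegY H y :=
  card_nbij' (fun x => (x, y)) Prod.fst (fun x hx => by simpa [bdegY] using hx)
    (fun _ h => by obtain ⟨hab, rfl⟩ := mem_filter.1 h; simpa using hab) (fun _ _ => rfl)
    (fun _ h => by obtain ⟨-, rfl⟩ := mem_filter.1 h; rfl)

lemma sum_bdegX (H : Finset (Fin n × Fin n)) : ∑ x, bdegX H x = H.card :=
  (card_eq_sum_card_fiberwise fun _ _ => mem_univ _).symm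

lemma sum_bdegY (H : Finset (Fin n × Fin n)) : ∑ y, bdegY H y = H.card :=
  (card_eq_sum_card_fiberwise fun _ _ => mem_univ _).symm

lemma bdegX_union (h : Disjoint H M) (x : Fin n) :
    bdegX (H ∪ M) x = bdegX H x + bdegX M x := by
  rw [bdegX, filter_union, card_union_of_disjoint (disjoint_filter_filter h)]; rfl

lemma bdegY_union (h : Disjoint H M) (y : Fin n) :
    bdegY (H ∪ M) y = bdegY H y + bdegY M y := by
  rw [bdegY, filter_union, card_union_of_disjoint (disjoint_filter_filter h)]; rfl

@[simp] lemma bdegX_empty (x : Fin n) : bdegX (∅ : Finset (Fin n × Fin n)) x = 0 := rfl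

@[simp] lemma bdegY_empty (y : Fin n) : bdegY (∅ : Finset (Fin n × Fin n)) y = 0 := rfl

lemma bdegX_erase_add (he : e ∈ H) (x : Fin n) :
    bdegX (H.erase e) x + (if e.1 = x then 1 else 0) = bdegX H x := by
  unfold bdegX
  rw [filter_erase]
  split_ifs with h
  · exact card_erase_add_one (mem_filter.2 ⟨he, h⟩)
  · rw [erase_eq_of_notMem (a := e) fun hmem => h (mem_filter.1 hmem).2]; rfl

lemma bdegY_erase_add (he : e ∈ H) (y : Fin n) :
    bdegY (H.erase e) y + (if e.2 = y then 1 else 0) = bdegY H y := by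
  unfold bdegY
  rw [filter_erase]
  split_ifs with h
  · exact card_erase_add_one (mem_filter.2 ⟨he, h⟩)
  · rw [erase_eq_of_notMem (a := e) fun hmem => h (mem_filter.1 hmem).2]; rfl

lemma bdegX_insert (he : e ∉ M) (x : Fin n) :
    bdegX (insert e M) x = bdegX M x + if e.1 = x then 1 else 0 := by
  unfold bdegX
  rw [filter_insert]
  split_ifs
  · exact card_insert_of_notMem fun hmem => he (mem_filter.1 hmem).1
  · rfl

lemma bdegY_insert (he : e ∉ M) (y : Fin n) :
    bdegY (insert e M) y = bdegY M y + if e.2 = y then 1 else 0 := by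
  unfold bdegY
  rw [filter_insert]
  split_ifs
  · exact card_insert_of_notMem fun hmem => he (mem_filter.1 hmem).1
  · rfl

lemma bdegX_eq_of_le_of_card_eq (hH : ∀ x, d ≤ bdegX H x)
    (hcard : H.card = d * n) (x : Fin n) : bdegX H x = d := by
  have hsum : ∑ _x : Fin n, d = ∑ x, bdegX H x := by simp [sum_bdegX, hcard, mul_comm]
  exact ((sum_eq_sum_iff_of_le fun x _ => hH x).1 hsum x (mem_univ x)).symm

lemma bdegY_eq_of_le_of_card_eq (hH : ∀ y, d ≤ bdegY H y)
    (hcard : H.card = d * n) (y : Fin n) : bdegY H y = d := by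
  have hsum : ∑ _y : Fin n, d = ∑ y, bdegY H y := by simp [sum_bdegY, hcard, mul_comm]
  exact ((sum_eq_sum_iff_of_le fun y _ => hH y).1 hsum y (mem_univ y)).symm

lemma mul_le_card_of_le_bdegX (hH : ∀ x, d ≤ bdegX H x) : d * n ≤ H.card := by
  simpa [← sum_bdegX H, mul_comm] using sum_le_sum fun x (_ : x ∈ univ) => hH x

lemma exists_lt_bdegX_add (h : d * n < H.card + M.card) :
    ∃ x, d < bdegX H x + bdegX M x := by
  obtain ⟨x, -, hx⟩ := exists_lt_of_sum_lt (s := univ) (f := fun _ => d)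
    (g := fun x => bdegX H x + bdegX M x) (by
      rw [sum_add_distrib, sum_bdegX, sum_bdegX, sum_const, card_fin, smul_eq_mul, mul_comm]
      exact h)
  exact ⟨x, hx⟩

lemma exists_lt_bdegY_add (h : d * n < H.card + M.card) :
    ∃ y, d < bdegY H y + bdegY M y := by
  obtain ⟨y, -, hy⟩ := exists_lt_of_sum_lt (s := univ) (f := fun _ => d)
    (g := fun y => bdegY H y + bdegY M y) (by
      rw [sum_add_distrib, sum_bdegY, sum_bdegY, sum_const, card_fin, smul_eq_mul, mul_comm]
      exact h)
  exact ⟨y, hy⟩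

end Degrees

section Matching

variable {n : ℕ} {M : Finset (Fin n × Fin n)}

lemma isBipMatching_empty : IsBipMatching (∅ : Finset (Fin n × Fin n)) := by
  simp [IsBipMatching]

lemma IsBipMatching.bdegX_le_one (hM : IsBipMatching M) (x : Fin n) : bdegX M x ≤ 1 :=
  card_le_one.2 fun e he f hf => by
    simp only [mem_filter] at he hf
    by_contra hne
    exact (hM e he.1 f hf.1 hne).1 (he.2.trans hf.2.symm)

lemma IsBipMatching.bdegY_le_one (hM : IsBipMatching M) (y : Fin n) : bdegY M y ≤ 1 :=
  card_le_one.2 fun e he f hf => by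
    simp only [mem_filter] at he hf
    by_contra hne
    exact (hM e he.1 f hf.1 hne).2 (he.2.trans hf.2.symm)

lemma IsBipMatching.insert (hM : IsBipMatching M) {a b : Fin n} (ha : a ∉ M.image Prod.fst)
    (hb : b ∉ M.image Prod.snd) : IsBipMatching (insert (a, b) M) := by
  have hfree : ∀ f ∈ M, a ≠ f.1 ∧ b ≠ f.2 := fun f hf =>
    ⟨fun h => ha (mem_image.2 ⟨f, hf, h.symm⟩), fun h => hb (mem_image.2 ⟨f, hf, h.symm⟩)⟩
  intro e he f hf hef
  rw [mem_insert] at he hf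
  rcases he with rfl | he <;> rcases hf with rfl | hf
  · exact absurd rfl hef
  · exact hfree f hf
  · exact (hfree e he).imp Ne.symm Ne.symm
  · exact hM e he f hf hef

end Matching

lemma BipDense.exists_mem {n : ℕ} {E : Finset (Fin n × Fin n)} {e r : ℝ}
    (hE : BipDense E e r) (he : 0 < e) (hr : 0 < r) {A B : Finset (Fin n)}
    (hA : r ≤ A.card) (hB : r ≤ B.card) : ∃ a ∈ A, ∃ b ∈ B, (a, b) ∈ E := by
  obtain ⟨A', hA', hA'card⟩ := exists_subset_card_eq (min_le_left A.card B.card)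
  obtain ⟨B', hB', hB'card⟩ := exists_subset_card_eq (min_le_right A.card B.card)
  have hcard : r ≤ (min A.card B.card : ℕ) := by rw [Nat.cast_min]; exact le_min hA hB
  have hlam : 1 ≤ (min A.card B.card : ℕ) / r := (one_le_div hr).2 hcard
  have hedges := hE _ hlam A' B' (by rw [hA'card]; field_simp) (by rw [hB'card]; field_simp)
  obtain ⟨⟨a, b⟩, hab⟩ : (E.filter fun p => p.1 ∈ A' ∧ p.2 ∈ B').Nonempty := by
    rw [← card_pos, ← Nat.cast_pos (α := ℝ)]
    exact lt_of_lt_of_le (by positivity) hedges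
  obtain ⟨habE, ha, hb⟩ := mem_filter.1 hab
  exact ⟨a, hA' ha, b, hB' hb, habE⟩

section Switching

variable {n : ℕ} {H M : Finset (Fin n × Fin n)} {x x' y y' : Fin n}

lemma bdegX_switch (h₁ : (x, y') ∈ H) (h₂ : (x', y) ∈ H) (hy : y' ≠ y) (hM : (x', y') ∉ M)
    (z : Fin n) :
    bdegX ((H.erase (x, y')).erase (x', y)) z + bdegX (insert (x', y') M) z +
      (if x = z then 1 else 0) = bdegX H z + bdegX M z := by
  have h₂' : (x', y) ∈ H.erase (x, y') := mem_erase.2 ⟨ne_of_apply_ne Prod.snd hy.symm, h₂⟩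
  have h₁z := bdegX_erase_add h₁ z
  have h₂z := bdegX_erase_add h₂' z
  rw [bdegX_insert hM z]
  simp only at h₁z h₂z ⊢
  omega

lemma bdegY_switch (h₁ : (x, y') ∈ H) (h₂ : (x', y) ∈ H) (hy : y' ≠ y) (hM : (x', y') ∉ M)
    (z : Fin n) :
    bdegY ((H.erase (x, y')).erase (x', y)) z + bdegY (insert (x', y') M) z +
      (if y = z then 1 else 0) = bdegY H z + bdegY M z := by
  have h₂' : (x', y) ∈ H.erase (x, y') := mem_erase.2 ⟨ne_of_apply_ne Prod.snd hy.symm, h₂⟩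
  have h₁z := bdegY_erase_add h₁ z
  have h₂z := bdegY_erase_add h₂' z
  rw [bdegY_insert hM z]
  simp only at h₁z h₂z ⊢
  omega

lemma exists_switchable {d m : ℕ} {E : Finset (Fin n × Fin n)} (hdm : 2 * m ≤ d)
    (hE : BipDense E 1 ((d : ℝ) / 2)) (hMm : M.card < m) (hx : d ≤ bdegX H x)
    (hy : d ≤ bdegY H y) :
    ∃ x' y', (x, y') ∈ H ∧ (x', y) ∈ H ∧ y' ≠ y ∧ (x', y') ∈ E ∧
      x' ∉ M.image Prod.fst ∧ y' ∉ M.image Prod.snd := by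
  have hA : d - M.card ≤ (nbrY H y \ M.image Prod.fst).card := by
    have hsdiff := le_card_sdiff (M.image Prod.fst) (nbrY H y)
    have := card_image_le (s := M) (f := Prod.fst)
    rw [card_nbrY] at hsdiff
    omega
  have hB : d - M.card - 1 ≤ ((nbrX H x \ M.image Prod.snd).erase y).card := by
    have hsdiff := le_card_sdiff (M.image Prod.snd) (nbrX H x)
    have := card_image_le (s := M) (f := Prod.snd)
    have := pred_card_le_card_erase (s := nbrX H x \ M.image Prod.snd) (a := y)
    rw [card_nbrX] at hsdiff
    omega
  have hsize : ∀ k : ℕ, d - M.card - 1 ≤ k → (d : ℝ) / 2 ≤ k := fun k hk => by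
    rw [div_le_iff₀ two_pos]
    exact_mod_cast (by omega : d ≤ k * 2)
  have hd : (0 : ℝ) < d := by exact_mod_cast (by omega : 0 < d)
  obtain ⟨x', hx', y', hy', hE'⟩ :=
    hE.exists_mem one_pos (by positivity) (hsize _ ((Nat.sub_le _ _).trans hA)) (hsize _ hB)
  simp only [mem_erase, mem_sdiff, mem_nbrX, mem_nbrY] at hx' hy'
  exact ⟨x', y', hy'.2.1, hx'.1, hy'.1, hE', hx'.2, hy'.2.2⟩

end Switching

section Regularization

variable {n d m : ℕ} {G E H M : Finset (Fin n × Fin n)}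

lemma exists_switch (hdm : 2 * m ≤ d) (hE : BipDense E 1 ((d : ℝ) / 2)) (hM : IsBipMatching M)
    (hME : M ⊆ E) (hMm : M.card < m) (hdX : ∀ x, d ≤ bdegX H x + bdegX M x)
    (hdY : ∀ y, d ≤ bdegY H y + bdegY M y) {x y : Fin n} (hx : d < bdegX H x + bdegX M x)
    (hy : d < bdegY H y + bdegY M y) :
    ∃ H' M', H' ⊆ H ∧ M' ⊆ E ∧ IsBipMatching M' ∧ H'.card + 2 = H.card ∧
      M'.card = M.card + 1 ∧
      (∀ x, d ≤ bdegX H' x + bdegX M' x) ∧ (∀ y, d ≤ bdegY H' y + bdegY M' y) := by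
  have hxH : d ≤ bdegX H x := by have := hM.bdegX_le_one x; omega
  have hyH : d ≤ bdegY H y := by have := hM.bdegY_le_one y; omega
  obtain ⟨x', y', h₁, h₂, hy'y, hE', hx'M, hy'M⟩ := exists_switchable hdm hE hMm hxH hyH
  have hnotM : (x', y') ∉ M := fun h => hx'M (mem_image_of_mem Prod.fst h)
  have h₂' : (x', y) ∈ H.erase (x, y') := mem_erase.2 ⟨ne_of_apply_ne Prod.snd hy'y.symm, h₂⟩
  refine ⟨(H.erase (x, y')).erase (x', y), insert (x', y') M,
    (erase_subset _ _).trans (erase_subset _ _), insert_subset hE' hME, hM.insert hx'M hy'M,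
    ?_, card_insert_of_notMem hnotM, fun z => ?_, fun z => ?_⟩
  · have := card_erase_add_one h₁
    have := card_erase_add_one h₂'
    omega
  · have := bdegX_switch h₁ h₂ hy'y hnotM z
    split_ifs at this with hz
    · subst hz; omega
    · have := hdX z; omega
  · have := bdegY_switch h₁ h₂ hy'y hnotM z
    split_ifs at this with hz
    · subst hz; omega
    · have := hdY z; omega

theorem exists_regular_of_excess (hdm : 2 * m ≤ d) (hGE : Disjoint G E)
    (hE : BipDense E 1 ((d : ℝ) / 2)) (s : ℕ) (hHG : H ⊆ G) (hME : M ⊆ E)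
    (hM : IsBipMatching M) (hcard : H.card + M.card = d * n + s) (hsm : s + M.card ≤ m)
    (hdX : ∀ x, d ≤ bdegX H x + bdegX M x) (hdY : ∀ y, d ≤ bdegY H y + bdegY M y) :
    ∃ H M : Finset (Fin n × Fin n), H ⊆ G ∧ M ⊆ E ∧ IsBipMatching M ∧ M.card ≤ m ∧
      (∀ x, bdegX (H ∪ M) x = d) ∧ (∀ y, bdegY (H ∪ M) y = d) := by
  induction s generalizing H M with
  | zero =>
    have hHM : Disjoint H M := hGE.mono hHG hME
    have hunion : (H ∪ M).card = d * n := by rw [card_union_of_disjoint hHM]; omega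
    refine ⟨H, M, hHG, hME, hM, by omega, bdegX_eq_of_le_of_card_eq ?_ hunion,
      bdegY_eq_of_le_of_card_eq ?_ hunion⟩
    · simpa only [bdegX_union hHM] using hdX
    · simpa only [bdegY_union hHM] using hdY
  | succ s ih =>
    obtain ⟨x, hx⟩ := exists_lt_bdegX_add (by omega : d * n < H.card + M.card)
    obtain ⟨y, hy⟩ := exists_lt_bdegY_add (by omega : d * n < H.card + M.card)
    obtain ⟨H', M', hH'H, hM'E, hM', hH'card, hM'card, hdX', hdY'⟩ :=
      exists_switch hdm hE hM hME (by omega) hdX hdY hx hy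
    exact ih (hH'H.trans hHG) hM'E hM' (by omega) (by omega) hdX' hdY'

end Regularization

/-- Regularization using a disjoint dense graph: for `d > 2m`, a balanced
bipartite graph `G` on `2n` vertices with `e(G) ≤ dn + m` and `δ(G) ≥ d`, together with an
edge-disjoint `(1, d/2)`-dense graph `E`, yields a subgraph `H ⊆ G` and a matching `M ⊆ E`
with at most `m` edges so that `H ∪ M` is `d`-regular. -/
theorem statement_15 :
    ∀ d m n : ℕ, 0 < d → 0 < m → 0 < n → 2 * m < d →
    ∀ G E : Finset (Fin n × Fin n),
      G.card ≤ d * n + m →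
      (∀ x, d ≤ bdegX G x) → (∀ y, d ≤ bdegY G y) →
      Disjoint G E →
      BipDense E 1 ((d : ℝ) / 2) →
      ∃ H M : Finset (Fin n × Fin n),
        H ⊆ G ∧ M ⊆ E ∧ IsBipMatching M ∧ M.card ≤ m ∧
        (∀ x, bdegX (H ∪ M) x = d) ∧ (∀ y, bdegY (H ∪ M) y = d) := by
  intro d m n _ _ _ hdm G E hGcard hdX hdY hGE hE
  have hdn := mul_le_card_of_le_bdegX hdX
  exact exists_regular_of_excess hdm.le hGE hE (G.card - d * n) subset_rfl (empty_subset E)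
    isBipMatching_empty (by rw [card_empty]; omega) (by rw [card_empty]; omega)
    (by simpa only [bdegX_empty, add_zero] using hdX)
    (by simpa only [bdegY_empty, add_zero] using hdY)
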